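/- arXiv:2211.12150 — 2 statements merged into one kernel-verified Lean document; each statement's English description precedes it below -/
import Mathlib

section
/- Let X be a finite set and m: 2^X → [0,1] a set function with m(∅) = 0. Define μ recursively (by cardinality) by μ(∅) = 0 and μ(B) = max_{A ⊊ B} μ(A) + m(B) for nonempty B. Then μ is a non-additive measure (monotone with μ(∅) = 0), and its (max,+)-transform equals m, i.e., μ(B) − max_{A ⊊ B} μ(A) = m(B) for all nonempty B. -/
open Finset

/-- The (max,+)-transform of a set function `μ`:
`τ_μ(B) = μ(B) − max_{A ⊊ B} μ(A)` for nonempty `B`, and `0` on `∅`. -/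
noncomputable def tauMax {X : Type*} [DecidableEq X] (μ : Finset X → ℝ) (B : Finset X) : ℝ :=
  if h : B.Nonempty then
    μ B - (B.powerset.erase B).sup'
      ⟨∅, Finset.mem_erase.mpr ⟨Ne.symm h.ne_empty, Finset.empty_mem_powerset B⟩⟩ μ
  else 0

theorem stmt3 {X : Type*} [Fintype X] [DecidableEq X] (m μ : Finset X → ℝ)
    (hm0 : m (∅ : Finset X) = 0) (hm : ∀ A : Finset X, 0 ≤ m A ∧ m A ≤ 1)
    (hμ0 : μ (∅ : Finset X) = 0)
    (hrec : ∀ B : Finset X, (h : B.Nonempty) →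
      μ B = (B.powerset.erase B).sup'
        ⟨∅, Finset.mem_erase.mpr ⟨Ne.symm h.ne_empty, Finset.empty_mem_powerset B⟩⟩ μ + m B) :
    (∀ A B : Finset X, A ⊆ B → μ A ≤ μ B) ∧
    (∀ B : Finset X, B.Nonempty → tauMax μ B = m B) := by
  constructor
  · intro A B hAB
    rcases eq_or_ne A B with rfl | hne
    · exact le_refl _
    · have hB : B.Nonempty := by
        rcases Finset.exists_of_ssubset (hAB.ssubset_of_ne hne) with ⟨x, hx, -⟩
        exact ⟨x, hx⟩
      have hmem : A ∈ B.powerset.erase B :=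
        Finset.mem_erase.mpr ⟨hne, Finset.mem_powerset.mpr hAB⟩
      calc μ A ≤ _ := Finset.le_sup' μ hmem
        _ ≤ _ + m B := le_add_of_nonneg_right (hm B).1
        _ = μ B := (hrec B hB).symm
  · intro B hB
    rw [tauMax, dif_pos hB, hrec B hB]
    ring
end

section
/- Let μ and ν be probability measures on finite sets X and Y, and c: X × Y → ℝ≥0 a cost function. Let κ > max_{x,y} c(x,y), and define c_b on 2^X × 2^Y by c_b({x},{y}) = c(x,y) for singletons and c_b(A,B) = κ for all other pairs. Then the minimum over nonnegative assignments assg: 2^X × 2^Y → [0,1] with marginals equal to the Möbius transforms τ_μ and τ_ν of the cost ∑_{A,B} c_b(A,B)·assg(A,B) equals the minimum cost of the classical optimal transport problem between the probability distributions p(x) = μ({x}) and q(y) = ν({y}) for cost c. Moreover, any optimal assg restricted to pairs of singletons is an optimal classical transport plan. -/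
open Finset

/-- The Möbius transform of a set function `μ` on a finite set:
`τ_μ(A) = ∑_{B ⊆ A} (−1)^{|A|−|B|} μ(B)`. -/
noncomputable def mobius {X : Type*} [DecidableEq X] (μ : Finset X → ℝ) (A : Finset X) : ℝ :=
  ∑ B ∈ A.powerset, (-1 : ℝ) ^ (A.card - B.card) * μ B

/-- Feasibility for the classical optimal transport problem between the
distributions `x ↦ μ {x}` and `y ↦ ν {y}`. -/
def ClassFeas {X Y : Type*} [Fintype X] [Fintype Y] [DecidableEq X] [DecidableEq Y]
    (μ : Finset X → ℝ) (ν : Finset Y → ℝ) (γ : X → Y → ℝ) : Prop :=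
  (∀ x y, 0 ≤ γ x y) ∧ (∀ x, ∑ y, γ x y = μ {x}) ∧ (∀ y, ∑ x, γ x y = ν {y})

/-- Feasibility for the bpa-based transport problem: nonnegative assignment with
marginals equal to the Möbius transforms. -/
noncomputable def BpaFeas {X Y : Type*} [Fintype X] [Fintype Y] [DecidableEq X] [DecidableEq Y]
    (μ : Finset X → ℝ) (ν : Finset Y → ℝ) (assg : Finset X → Finset Y → ℝ) : Prop :=
  (∀ A B, 0 ≤ assg A B ∧ assg A B ≤ 1) ∧
  (∀ A : Finset X, ∑ B : Finset Y, assg A B = mobius μ A) ∧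
  (∀ B : Finset Y, ∑ A : Finset X, assg A B = mobius ν B)

/-!
For an additive μ with μ ∅ = 0, the Möbius transform vanishes off singletons: reindexing by
complements, τ_μ(A) = ∑_{x ∈ A} μ{x} · ∑_{C ⊆ A \ {x}} (-1)^{|C|}, and the alternating sum
is zero as soon as |A| ≥ 2. The marginal constraints then force every feasible bpa assignment
to vanish off pairs of singletons, where the cost c_b is c. So restricting to singletons and
extending by zero are cost-preserving maps between the two feasible sets, and the two problems
have the same set of attainable costs.
-/

section Mobius

variable {X : Type*} [DecidableEq X]

lemma sum_powerset_neg_one_pow_card_sdiff_mul (A : Finset X) (f : Finset X → ℝ) :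
    ∑ B ∈ A.powerset, (-1 : ℝ) ^ (#A - #B) * f B =
      ∑ C ∈ A.powerset, (-1 : ℝ) ^ #C * f (A \ C) := by
  refine sum_nbij' (A \ ·) (A \ ·) (fun _ _ ↦ by simp) (fun _ _ ↦ by simp)
    (fun B hB ↦ Finset.sdiff_sdiff_eq_self (mem_powerset.1 hB))
    (fun C hC ↦ Finset.sdiff_sdiff_eq_self (mem_powerset.1 hC)) fun B hB ↦ ?_
  rw [card_sdiff_of_subset (mem_powerset.1 hB), Finset.sdiff_sdiff_eq_self (mem_powerset.1 hB)]

lemma powerset_filter_notMem (A : Finset X) (x : X) :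
    A.powerset.filter (x ∉ ·) = (A.erase x).powerset := by
  ext C
  simp [subset_erase]

variable {μ : Finset X → ℝ}

lemma eq_sum_singleton_of_additive (hμ0 : μ ∅ = 0)
    (hμadd : ∀ A B : Finset X, Disjoint A B → μ (A ∪ B) = μ A + μ B) (A : Finset X) :
    μ A = ∑ x ∈ A, μ {x} := by
  induction A using Finset.cons_induction with
  | empty => simpa
  | cons a s ha ih =>
    rw [cons_eq_insert, insert_eq, hμadd {a} s (by simpa), sum_union (by simpa), sum_singleton, ih]

lemma mobius_singleton (hμ0 : μ ∅ = 0) (x : X) : mobius μ {x} = μ {x} := by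
  rw [mobius, ← insert_empty_eq, sum_powerset_insert (notMem_empty x)]
  simp [hμ0]

lemma mobius_eq_zero_of_card_ne_one (hμ0 : μ ∅ = 0)
    (hμadd : ∀ A B : Finset X, Disjoint A B → μ (A ∪ B) = μ A + μ B)
    {A : Finset X} (hA : #A ≠ 1) : mobius μ A = 0 := by
  calc mobius μ A = ∑ C ∈ A.powerset, (-1 : ℝ) ^ #C * μ (A \ C) :=
        sum_powerset_neg_one_pow_card_sdiff_mul A μ
    _ = ∑ x ∈ A, ∑ C ∈ A.powerset, if x ∉ C then (-1 : ℝ) ^ #C * μ {x} else 0 := by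
        rw [sum_comm]
        refine sum_congr rfl fun C _ ↦ ?_
        rw [eq_sum_singleton_of_additive hμ0 hμadd, sdiff_eq_filter, sum_filter, mul_sum]
        simp only [mul_ite, mul_zero]
    _ = ∑ x ∈ A, (∑ C ∈ (A.erase x).powerset, (-1 : ℝ) ^ #C) * μ {x} := by
        refine sum_congr rfl fun x _ ↦ ?_
        rw [← sum_filter, powerset_filter_notMem, sum_mul]
    _ = 0 := sum_eq_zero fun x hx ↦ by
        have hne : (A.erase x).Nonempty := by
          rw [← card_pos, card_erase_of_mem hx]
          have := card_pos.2 ⟨x, hx⟩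
          omega
        have hsum : ∑ C ∈ (A.erase x).powerset, (-1 : ℝ) ^ #C = 0 := by
          exact_mod_cast sum_powerset_neg_one_pow_card_of_nonempty hne
        rw [hsum, zero_mul]

end Mobius

lemma Fintype.sum_finset_eq_sum_singleton {X M : Type*} [Fintype X] [AddCommMonoid M]
    (f : Finset X → M) (hf : ∀ A, #A ≠ 1 → f A = 0) : ∑ A, f A = ∑ x, f {x} := by
  refine (Fintype.sum_of_injective _ singleton_injective _ _ (fun A hA ↦ hf A fun h ↦ ?_)
    fun _ ↦ rfl).symm
  obtain ⟨x, rfl⟩ := card_eq_one.1 h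
  exact hA ⟨x, rfl⟩

lemma Fintype.sum_sum_finset_eq_sum_sum_singleton {X Y M : Type*} [Fintype X] [Fintype Y]
    [AddCommMonoid M] (f : Finset X → Finset Y → M)
    (hf : ∀ A B, ¬(#A = 1 ∧ #B = 1) → f A B = 0) :
    ∑ A, ∑ B, f A B = ∑ x, ∑ y, f {x} {y} := by
  rw [Fintype.sum_finset_eq_sum_singleton (fun A ↦ ∑ B, f A B) fun A hA ↦
    Finset.sum_eq_zero fun B _ ↦ hf A B (by tauto)]
  exact Finset.sum_congr rfl fun x _ ↦
    Fintype.sum_finset_eq_sum_singleton _ fun B hB ↦ hf {x} B (by tauto)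

section SingletonExtend

variable {X Y M : Type*} [Zero M]

lemma Function.extend_singleton_of_card_ne_one {Z W : Type*} (g : Z → W) (e : Finset Z → W)
    (C : Finset Z) (hC : #C ≠ 1) : Function.extend singleton g e C = e C :=
  Function.extend_apply' _ _ _ fun ⟨z, hz⟩ ↦ hC (hz ▸ card_singleton z)

noncomputable def singletonExtend (γ : X → Y → M) : Finset X → Finset Y → M :=
  Function.extend singleton (fun x ↦ Function.extend singleton (γ x) 0) 0

lemma singletonExtend_singleton (γ : X → Y → M) (x : X) (y : Y) :
    singletonExtend γ {x} {y} = γ x y := by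
  simp [singletonExtend, singleton_injective.extend_apply]

lemma singletonExtend_eq_zero (γ : X → Y → M) (A : Finset X) (B : Finset Y)
    (hAB : ¬(#A = 1 ∧ #B = 1)) : singletonExtend γ A B = 0 := by
  rcases not_and_or.1 hAB with hA | hB
  · rw [singletonExtend, Function.extend_singleton_of_card_ne_one _ _ A hA]
    rfl
  · by_cases hA : #A = 1
    · obtain ⟨x, rfl⟩ := card_eq_one.1 hA
      rw [singletonExtend, singleton_injective.extend_apply,
        Function.extend_singleton_of_card_ne_one _ _ B hB]
      rfl
    · rw [singletonExtend, Function.extend_singleton_of_card_ne_one _ _ A hA]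
      rfl

end SingletonExtend

section Transport

variable {X Y : Type*} [Fintype X] [Fintype Y] [DecidableEq X] [DecidableEq Y]
variable {μ : Finset X → ℝ} {ν : Finset Y → ℝ}

lemma BpaFeas.eq_zero_of_not_card_eq_one (hμ : ∀ A : Finset X, #A ≠ 1 → mobius μ A = 0)
    (hν : ∀ B : Finset Y, #B ≠ 1 → mobius ν B = 0) {assg : Finset X → Finset Y → ℝ}
    (h : BpaFeas μ ν assg) (A : Finset X) (B : Finset Y) (hAB : ¬(#A = 1 ∧ #B = 1)) :
    assg A B = 0 := by
  obtain ⟨hnn, hrow, hcol⟩ := h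
  rcases not_and_or.1 hAB with hA | hB
  · refine (sum_eq_zero_iff_of_nonneg fun B _ ↦ (hnn A B).1).1 ?_ B (mem_univ B)
    rw [hrow, hμ A hA]
  · refine (sum_eq_zero_iff_of_nonneg fun A _ ↦ (hnn A B).1).1 ?_ A (mem_univ A)
    rw [hcol, hν B hB]

lemma BpaFeas.sum_cost_eq (hμ : ∀ A : Finset X, #A ≠ 1 → mobius μ A = 0)
    (hν : ∀ B : Finset Y, #B ≠ 1 → mobius ν B = 0) {c : X → Y → ℝ}
    {cb : Finset X → Finset Y → ℝ} (hcb : ∀ x y, cb {x} {y} = c x y)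
    {assg : Finset X → Finset Y → ℝ} (h : BpaFeas μ ν assg) :
    ∑ A, ∑ B, cb A B * assg A B = ∑ x, ∑ y, c x y * assg {x} {y} := by
  rw [Fintype.sum_sum_finset_eq_sum_sum_singleton _ fun A B hAB ↦ by
    rw [h.eq_zero_of_not_card_eq_one hμ hν A B hAB, mul_zero]]
  simp only [hcb]

lemma BpaFeas.classFeas (hμ0 : μ ∅ = 0) (hν0 : ν ∅ = 0)
    (hμ : ∀ A : Finset X, #A ≠ 1 → mobius μ A = 0)
    (hν : ∀ B : Finset Y, #B ≠ 1 → mobius ν B = 0) {assg : Finset X → Finset Y → ℝ}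
    (h : BpaFeas μ ν assg) : ClassFeas μ ν fun x y ↦ assg {x} {y} := by
  have hs := h.eq_zero_of_not_card_eq_one hμ hν
  obtain ⟨hnn, hrow, hcol⟩ := h
  refine ⟨fun x y ↦ (hnn _ _).1, fun x ↦ ?_, fun y ↦ ?_⟩
  · rw [← Fintype.sum_finset_eq_sum_singleton (assg {x}) fun B hB ↦ hs _ _ (by tauto), hrow,
      mobius_singleton hμ0]
  · rw [← Fintype.sum_finset_eq_sum_singleton (assg · {y}) fun A hA ↦ hs _ _ (by tauto), hcol,
      mobius_singleton hν0]

lemma ClassFeas.bpaFeas_singletonExtend (hμ0 : μ ∅ = 0) (hν0 : ν ∅ = 0)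
    (hμ : ∀ A : Finset X, #A ≠ 1 → mobius μ A = 0)
    (hν : ∀ B : Finset Y, #B ≠ 1 → mobius ν B = 0) (hμle : ∀ x, μ {x} ≤ 1)
    {γ : X → Y → ℝ} (h : ClassFeas μ ν γ) : BpaFeas μ ν (singletonExtend γ) := by
  obtain ⟨hnn, hrow, hcol⟩ := h
  have hs := singletonExtend_eq_zero γ
  refine ⟨fun A B ↦ ?_, fun A ↦ ?_, fun B ↦ ?_⟩
  · by_cases hAB : #A = 1 ∧ #B = 1
    · obtain ⟨x, rfl⟩ := card_eq_one.1 hAB.1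
      obtain ⟨y, rfl⟩ := card_eq_one.1 hAB.2
      rw [singletonExtend_singleton]
      exact ⟨hnn x y, (single_le_sum (fun y' _ ↦ hnn x y') (mem_univ y)).trans
        ((hrow x).le.trans (hμle x))⟩
    · simp [hs A B hAB]
  · by_cases hA : #A = 1
    · obtain ⟨x, rfl⟩ := card_eq_one.1 hA
      rw [Fintype.sum_finset_eq_sum_singleton _ fun B hB ↦ hs _ _ (by tauto),
        mobius_singleton hμ0]
      simpa only [singletonExtend_singleton] using hrow x
    · rw [hμ A hA]
      exact sum_eq_zero fun B _ ↦ hs _ _ (by tauto)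
  · by_cases hB : #B = 1
    · obtain ⟨y, rfl⟩ := card_eq_one.1 hB
      rw [Fintype.sum_finset_eq_sum_singleton (singletonExtend γ · {y})
        fun A hA ↦ hs _ _ (by tauto), mobius_singleton hν0]
      simpa only [singletonExtend_singleton] using hcol y
    · rw [hν B hB]
      exact sum_eq_zero fun A _ ↦ hs _ _ (by tauto)

lemma classCosts_eq_bpaCosts (hμ0 : μ ∅ = 0) (hν0 : ν ∅ = 0)
    (hμ : ∀ A : Finset X, #A ≠ 1 → mobius μ A = 0)
    (hν : ∀ B : Finset Y, #B ≠ 1 → mobius ν B = 0) (hμle : ∀ x, μ {x} ≤ 1)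
    {c : X → Y → ℝ} {cb : Finset X → Finset Y → ℝ} (hcb : ∀ x y, cb {x} {y} = c x y) :
    {t : ℝ | ∃ γ : X → Y → ℝ, ClassFeas μ ν γ ∧ t = ∑ x, ∑ y, c x y * γ x y} =
      {t : ℝ | ∃ assg : Finset X → Finset Y → ℝ, BpaFeas μ ν assg ∧
        t = ∑ A, ∑ B, cb A B * assg A B} := by
  ext t
  constructor
  · rintro ⟨γ, hγ, rfl⟩
    have hext := hγ.bpaFeas_singletonExtend hμ0 hν0 hμ hν hμle
    refine ⟨singletonExtend γ, hext, ?_⟩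
    simp only [hext.sum_cost_eq hμ hν hcb, singletonExtend_singleton]
  · rintro ⟨assg, h, rfl⟩
    exact ⟨_, h.classFeas hμ0 hν0 hμ hν, h.sum_cost_eq hμ hν hcb⟩

end Transport

theorem stmt10_general {X Y : Type*} [Fintype X] [Fintype Y] [DecidableEq X] [DecidableEq Y]
    (μ : Finset X → ℝ) (ν : Finset Y → ℝ)
    (hμrange : ∀ A : Finset X, 0 ≤ μ A ∧ μ A ≤ 1)
    (hμ0 : μ (∅ : Finset X) = 0)
    (hμadd : ∀ A B : Finset X, Disjoint A B → μ (A ∪ B) = μ A + μ B)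
    (hν0 : ν (∅ : Finset Y) = 0)
    (hνadd : ∀ A B : Finset Y, Disjoint A B → ν (A ∪ B) = ν A + ν B)
    (c : X → Y → ℝ)
    (cb : Finset X → Finset Y → ℝ)
    (hcb1 : ∀ (x : X) (y : Y), cb {x} {y} = c x y) :
    sInf {t : ℝ | ∃ γ : X → Y → ℝ, ClassFeas μ ν γ ∧ t = ∑ x, ∑ y, c x y * γ x y} =
      sInf {t : ℝ | ∃ assg : Finset X → Finset Y → ℝ, BpaFeas μ ν assg ∧
        t = ∑ A : Finset X, ∑ B : Finset Y, cb A B * assg A B} ∧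
    ∀ assg : Finset X → Finset Y → ℝ, BpaFeas μ ν assg →
      (∑ A : Finset X, ∑ B : Finset Y, cb A B * assg A B) =
        sInf {t : ℝ | ∃ assg' : Finset X → Finset Y → ℝ, BpaFeas μ ν assg' ∧
          t = ∑ A : Finset X, ∑ B : Finset Y, cb A B * assg' A B} →
      ClassFeas μ ν (fun x y => assg {x} {y}) ∧
      (∑ x, ∑ y, c x y * assg {x} {y}) =
        sInf {t : ℝ | ∃ γ : X → Y → ℝ, ClassFeas μ ν γ ∧ t = ∑ x, ∑ y, c x y * γ x y} := by
  have hμ (A : Finset X) : #A ≠ 1 → mobius μ A = 0 := mobius_eq_zero_of_card_ne_one hμ0 hμadd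
  have hν (B : Finset Y) : #B ≠ 1 → mobius ν B = 0 := mobius_eq_zero_of_card_ne_one hν0 hνadd
  have hcosts := classCosts_eq_bpaCosts hμ0 hν0 hμ hν (fun x ↦ (hμrange {x}).2) hcb1
  refine ⟨by rw [hcosts], fun assg h hopt ↦ ⟨h.classFeas hμ0 hν0 hμ hν, ?_⟩⟩
  rw [hcosts, ← h.sum_cost_eq hμ hν hcb1]
  exact hopt

theorem stmt10 {X Y : Type*} [Fintype X] [Fintype Y] [DecidableEq X] [DecidableEq Y]
    (μ : Finset X → ℝ) (ν : Finset Y → ℝ)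
    (hμrange : ∀ A : Finset X, 0 ≤ μ A ∧ μ A ≤ 1)
    (hμ0 : μ (∅ : Finset X) = 0) (hμ1 : μ (Finset.univ : Finset X) = 1)
    (hμadd : ∀ A B : Finset X, Disjoint A B → μ (A ∪ B) = μ A + μ B)
    (hνrange : ∀ B : Finset Y, 0 ≤ ν B ∧ ν B ≤ 1)
    (hν0 : ν (∅ : Finset Y) = 0) (hν1 : ν (Finset.univ : Finset Y) = 1)
    (hνadd : ∀ A B : Finset Y, Disjoint A B → ν (A ∪ B) = ν A + ν B)
    (c : X → Y → ℝ) (hc : ∀ x y, 0 ≤ c x y)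
    (κ : ℝ) (hκ : ∀ x y, c x y < κ)
    (cb : Finset X → Finset Y → ℝ)
    (hcb1 : ∀ (x : X) (y : Y), cb {x} {y} = c x y)
    (hcb2 : ∀ (A : Finset X) (B : Finset Y), ¬ (A.card = 1 ∧ B.card = 1) → cb A B = κ) :
    sInf {t : ℝ | ∃ γ : X → Y → ℝ, ClassFeas μ ν γ ∧ t = ∑ x, ∑ y, c x y * γ x y} =
      sInf {t : ℝ | ∃ assg : Finset X → Finset Y → ℝ, BpaFeas μ ν assg ∧
        t = ∑ A : Finset X, ∑ B : Finset Y, cb A B * assg A B} ∧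
    ∀ assg : Finset X → Finset Y → ℝ, BpaFeas μ ν assg →
      (∑ A : Finset X, ∑ B : Finset Y, cb A B * assg A B) =
        sInf {t : ℝ | ∃ assg' : Finset X → Finset Y → ℝ, BpaFeas μ ν assg' ∧
          t = ∑ A : Finset X, ∑ B : Finset Y, cb A B * assg' A B} →
      ClassFeas μ ν (fun x y => assg {x} {y}) ∧
      (∑ x, ∑ y, c x y * assg {x} {y}) =
        sInf {t : ℝ | ∃ γ : X → Y → ℝ, ClassFeas μ ν γ ∧ t = ∑ x, ∑ y, c x y * γ x y} :=
  stmt10_general μ ν hμrange hμ0 hμadd hν0 hνadd c cb hcb1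
end
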